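/- arXiv:1704.06823 — 4 statements merged into one kernel-verified Lean document; each statement's English description precedes it below -/
import Mathlib

section
/- Fix positive integers l and i with 0 ≤ i ≤ l−1, and for s ∈ {0,1,…,2^i−1} define f(s) = (2^i + s + 1) · Σ_{j = 2^l + 2^{l−i−1}(2s+1)}^{2^l − 1 + 2^{l−i−1}(2s+2)} 1/j. Then f is strictly decreasing in s. -/
/-- f(s) = (2^i + s + 1) · Σ_{j = 2^l + 2^{l-i-1}(2s+1)}^{2^l - 1 + 2^{l-i-1}(2s+2)} 1/j -/
noncomputable def f (l i s : ℕ) : ℝ :=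
  ((2 : ℝ) ^ i + s + 1) *
    ∑ j ∈ Finset.Icc (2 ^ l + 2 ^ (l - i - 1) * (2 * s + 1))
        (2 ^ l - 1 + 2 ^ (l - i - 1) * (2 * s + 2)), (1 : ℝ) / j

/-!
With `D = 2^(l-i-1)` and `a = 2^i + s + 1` we have `2^l = 2 D 2^i`, so the `k`-th of the `D`
summands of `f l i s` is `a / (2 D a - (D - k))`, and `s ↦ s + 1` replaces `a` by `a + 1`.
Since `0 ≤ k < D`, each summand is a strictly decreasing function of `a`, because
`a / (d a - c) = (1 + c / (d a - c)) / d` with `c > 0`.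
-/

open Finset

theorem div_mul_sub_lt_div_mul_sub {a b c d : ℝ} (hd : 0 ≤ d) (hc : 0 < c) (ha : c < d * a)
    (hab : a < b) : b / (d * b - c) < a / (d * a - c) := by
  have hb : c < d * b := ha.trans_le (by gcongr)
  rw [div_lt_div_iff₀ (by linarith) (by linarith)]
  nlinarith

theorem sum_Icc_eq_sum_range {M : Type*} [AddCommMonoid M] (g : ℕ → M) {m n D : ℕ}
    (h : n + 1 = m + D) : ∑ j ∈ Icc m n, g j = ∑ k ∈ range D, g (m + k) := by
  rw [← Ico_add_one_right_eq_Icc, sum_Ico_eq_sum_range, h, Nat.add_sub_cancel_left]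

theorem f_eq_sum_range {l i : ℕ} (hil : i < l) (s : ℕ) :
    f l i s = ∑ k ∈ range (2 ^ (l - i - 1)),
      ((2 : ℝ) ^ i + s + 1) / (2 * 2 ^ (l - i - 1) * (2 ^ i + s + 1) - (2 ^ (l - i - 1) - k)) := by
  have hpow : 2 ^ l = 2 * 2 ^ (l - i - 1) * 2 ^ i := by
    rw [← pow_succ', ← pow_add]
    congr 1
    omega
  have hpos : 1 ≤ 2 ^ l := Nat.one_le_two_pow
  unfold f
  rw [sum_Icc_eq_sum_range (D := 2 ^ (l - i - 1)) _ (by ring_nf; omega), mul_sum]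
  refine sum_congr rfl fun k _ => ?_
  rw [mul_one_div, hpow]
  push_cast
  ring_nf

theorem f_strictAnti (l i : ℕ) (hl : 1 ≤ l) (hi : i ≤ l - 1) :
    ∀ s : ℕ, s + 1 ≤ 2 ^ i - 1 → f l i (s + 1) < f l i s := by
  intro s _
  have hil : i < l := by omega
  rw [f_eq_sum_range hil, f_eq_sum_range hil]
  refine sum_lt_sum_of_nonempty (nonempty_range_iff.mpr (by positivity)) fun k hk => ?_
  have hkD : (k : ℝ) < 2 ^ (l - i - 1) := by exact_mod_cast mem_range.mp hk
  push_cast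
  apply div_mul_sub_lt_div_mul_sub (by positivity) (by linarith)
  · nlinarith [one_le_pow₀ (n := i) (one_le_two : (1 : ℝ) ≤ 2), (s.cast_nonneg : (0 : ℝ) ≤ s)]
  · linarith
end

section
/- For every n ≥ 1 the radius r* = 1/(3 + √(2√3 n)) satisfies both (2⌈√(√3·n/2)⌉ + 1) r* ≤ 1 and (√3(⌈√(2n/√3)⌉ − 1) + 2) r* ≤ 1. -/
/-!
Write `s = √(2√3 n)`, so that `1 / r* = 3 + s`. The two ceilings are `⌈s / 2⌉` and `⌈s / √3⌉`,
and `c (⌈a / c⌉ - 1) ≤ a` bounds both `2 ⌈s / 2⌉ + 1` and `√3 (⌈s / √3⌉ - 1) + 2` by `s + 3`.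
-/

theorem Nat.mul_ceil_div_sub_one_le {K : Type*} [Field K] [LinearOrder K] [IsStrictOrderedRing K]
    [FloorSemiring K] {a c : K} (ha : 0 ≤ a) (hc : 0 < c) :
    c * ((⌈a / c⌉₊ : K) - 1) ≤ a := by
  have hceil : (⌈a / c⌉₊ : K) < a / c + 1 := Nat.ceil_lt_add_one (div_nonneg ha hc.le)
  calc c * ((⌈a / c⌉₊ : K) - 1) ≤ c * (a / c) := by gcongr; linarith
    _ = a := mul_div_cancel₀ a hc.ne'

theorem Real.sqrt_div_sq {x c : ℝ} (hx : 0 ≤ x) (hc : 0 ≤ c) : √(x / c ^ 2) = √x / c := by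
  rw [Real.sqrt_div hx, Real.sqrt_sq hc]

theorem hexagonal_packing_radius_fits_general (n : ℕ) :
    (2 * (⌈Real.sqrt (Real.sqrt 3 * n / 2)⌉₊ : ℝ) + 1) *
        (1 / (3 + Real.sqrt (2 * Real.sqrt 3 * n))) ≤ 1 ∧
      (Real.sqrt 3 * ((⌈Real.sqrt (2 * n / Real.sqrt 3)⌉₊ : ℝ) - 1) + 2) *
        (1 / (3 + Real.sqrt (2 * Real.sqrt 3 * n))) ≤ 1 := by
  set s := √(2 * √3 * n)
  have hs : 0 ≤ s := Real.sqrt_nonneg _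
  have h3 : 0 < √3 := by positivity
  have hx : 0 ≤ 2 * √3 * n := by positivity
  have hrow : √(√3 * n / 2) = s / 2 := by
    rw [← Real.sqrt_div_sq hx zero_le_two]; congr 1; ring
  have hcol : √(2 * n / √3) = s / √3 := by
    rw [← Real.sqrt_div_sq hx h3.le, Real.sq_sqrt zero_le_three]
    congr 1; field_simp; rw [Real.sq_sqrt zero_le_three]
  have hrow_le := Nat.mul_ceil_div_sub_one_le hs zero_lt_two
  have hcol_le := Nat.mul_ceil_div_sub_one_le hs h3
  simp only [mul_one_div, div_le_one (by positivity : (0 : ℝ) < 3 + s), hrow, hcol]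
  constructor <;> linarith

theorem hexagonal_packing_radius_fits (n : ℕ) (hn : 1 ≤ n) :
    (2 * (⌈Real.sqrt (Real.sqrt 3 * n / 2)⌉₊ : ℝ) + 1) *
        (1 / (3 + Real.sqrt (2 * Real.sqrt 3 * n))) ≤ 1 ∧
      (Real.sqrt 3 * ((⌈Real.sqrt (2 * n / Real.sqrt 3)⌉₊ : ℝ) - 1) + 2) *
        (1 / (3 + Real.sqrt (2 * Real.sqrt 3 * n))) ≤ 1 :=
  hexagonal_packing_radius_fits_general n
end

section
/- Let δ(r) = ⌊3r − 4√(r/(2√3)) + 1/(2√3)⌋. Then lim_{r→∞} Σ_{i=1}^{δ(r)} π·(1/(2 + √(2√3 r)))² = √3·π/2. -/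
/-!
The sum consists of `⌊g r⌋` equal terms `v r = π / (2 + √(2√3 r))²`, where
`g r = 3r - 4√(r / 2√3) + 1 / 2√3 ~ 3r` and `v r ~ π / (2√3 r)`, so `g r * v r → 3π / 2√3 = √3π / 2`.
Replacing `g r` by its floor changes the product by at most `v r → 0`.
-/

open Filter Real Topology

theorem Int.sum_Icc_one_const {R : Type*} [Ring R] {n : ℤ} (hn : 0 ≤ n) (c : R) :
    ∑ _i ∈ Finset.Icc (1 : ℤ) n, c = n * c := by
  rw [Finset.sum_const, Int.card_Icc, add_sub_cancel_right, ← natCast_zsmul,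
    Int.toNat_of_nonneg hn, zsmul_eq_mul]

section Floor

variable {α : Type*} [Ring α] [LinearOrder α] [IsStrictOrderedRing α] [FloorRing α]
  [TopologicalSpace α] [OrderTopology α] [ContinuousSub α] {ι : Type*} {l : Filter ι}
  {u v : ι → α} {L : α}

theorem tendsto_floor_mul_of_tendsto_mul (huv : Tendsto (fun i => u i * v i) l (𝓝 L))
    (hv : Tendsto v l (𝓝 0)) (hv_nonneg : ∀ᶠ i in l, 0 ≤ v i) :
    Tendsto (fun i => (⌊u i⌋ : α) * v i) l (𝓝 L) := by
  have hlower : Tendsto (fun i => (u i - 1) * v i) l (𝓝 L) := by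
    simpa only [sub_mul, one_mul, sub_zero] using huv.sub hv
  refine tendsto_of_tendsto_of_tendsto_of_le_of_le' hlower huv ?_ ?_ <;>
    filter_upwards [hv_nonneg] with i hi <;> gcongr
  exacts [(Int.sub_one_lt_floor _).le, Int.floor_le _]

theorem tendsto_sum_Icc_floor_of_tendsto_mul (huv : Tendsto (fun i => u i * v i) l (𝓝 L))
    (hv : Tendsto v l (𝓝 0)) (hv_nonneg : ∀ᶠ i in l, 0 ≤ v i) (hL : 0 < L) :
    Tendsto (fun i => ∑ _j ∈ Finset.Icc (1 : ℤ) ⌊u i⌋, v i) l (𝓝 L) := by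
  refine (tendsto_floor_mul_of_tendsto_mul huv hv hv_nonneg).congr' ?_
  filter_upwards [huv.eventually (lt_mem_nhds hL), hv_nonneg] with i hpos hi
  rw [Int.sum_Icc_one_const (Int.floor_nonneg.mpr (pos_of_mul_pos_left hpos hi).le)]

end Floor

theorem tendsto_inv_sqrt_atTop_zero : Tendsto (fun r : ℝ => (√r)⁻¹) atTop (𝓝 0) :=
  tendsto_inv_atTop_zero.comp tendsto_sqrt_atTop

theorem tendsto_sub_mul_sqrt_add_div_self_atTop (a b c : ℝ) :
    Tendsto (fun r : ℝ => (a * r - b * √r + c) / r) atTop (𝓝 a) := by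
  have hsqrt : Tendsto (fun r : ℝ => √r / r) atTop (𝓝 0) := by
    simpa only [sqrt_div_self', one_div] using tendsto_inv_sqrt_atTop_zero
  have := ((hsqrt.const_mul b).const_sub a).add (tendsto_inv_atTop_zero.const_mul c)
  rw [mul_zero, mul_zero, sub_zero, add_zero] at this
  refine this.congr' ?_
  filter_upwards [eventually_gt_atTop 0] with r hr
  field_simp

theorem tendsto_self_mul_one_div_add_mul_sqrt_sq_atTop (a : ℝ) {b : ℝ} (hb : b ≠ 0) :
    Tendsto (fun r : ℝ => r * (1 / (a + b * √r)) ^ 2) atTop (𝓝 (1 / b ^ 2)) := by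
  have := (((tendsto_inv_sqrt_atTop_zero.const_mul a).add_const b).inv₀ (by simpa using hb)).pow 2
  rw [mul_zero, zero_add, inv_pow, ← one_div] at this
  refine this.congr' ?_
  filter_upwards [eventually_gt_atTop 0] with r hr
  have hs : √r ≠ 0 := (sqrt_pos.mpr hr).ne'
  rw [show a * (√r)⁻¹ + b = (a + b * √r) / √r by field_simp, inv_div, div_pow, sq_sqrt hr.le,
    one_div, inv_pow, div_eq_mul_inv]

theorem limit_third_term :
    Tendsto
      (fun r : ℝ =>
        ∑ _i ∈ Finset.Icc (1 : ℤ)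
            ⌊3 * r - 4 * Real.sqrt (r / (2 * Real.sqrt 3)) + 1 / (2 * Real.sqrt 3)⌋,
          π * (1 / (2 + Real.sqrt (2 * Real.sqrt 3 * r))) ^ 2)
      atTop (nhds (Real.sqrt 3 * π / 2)) := by
  have hd : (0 : ℝ) < 2 * √3 := by positivity
  have hu : Tendsto (fun r : ℝ => (3 * r - 4 * √(r / (2 * √3)) + 1 / (2 * √3)) / r) atTop
      (𝓝 3) := by
    convert tendsto_sub_mul_sqrt_add_div_self_atTop 3 (4 / √(2 * √3)) (1 / (2 * √3)) using 2
    rw [sqrt_div' _ hd.le]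
    ring
  have hv : Tendsto (fun r : ℝ => r * (π * (1 / (2 + √(2 * √3 * r))) ^ 2)) atTop
      (𝓝 (π / (2 * √3))) := by
    convert (tendsto_self_mul_one_div_add_mul_sqrt_sq_atTop 2
      (sqrt_pos.mpr hd).ne').const_mul π using 2
    · rw [sqrt_mul hd.le]
      ring
    · rw [sq_sqrt hd.le, mul_one_div]
  refine tendsto_sum_Icc_floor_of_tendsto_mul ?_ ?_ (.of_forall fun r => by positivity)
    (by positivity)
  · convert (hu.mul hv).congr' ?_ using 2
    · field_simp
      exact sq_sqrt zero_le_three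
    · filter_upwards [eventually_ne_atTop 0] with r hr
      field_simp
  · refine (hv.div_atTop tendsto_id).congr' ?_
    filter_upwards [eventually_ne_atTop 0] with r hr
    exact mul_div_cancel_left₀ _ hr
end

section
/- Let P be a k-dimensional polytope, let p₁,…,pₙ ∈ P, and let Disp(n;P) be the optimal dispersion distance for n points in P. Then there exists a point p ∈ P with min_{i∈[n]} min{dis(p,p_i), dis(p,∂P)} ≥ Disp(n;P)/2. -/
/-- `disp k n P`: the optimal dispersion distance for `n` points in `P ⊆ ℝᵏ`. -/
noncomputable def disp (k n : ℕ) (P : Set (EuclideanSpace ℝ (Fin k))) : ℝ :=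
  sSup {d : ℝ | ∃ X : Fin n → EuclideanSpace ℝ (Fin k),
    (∀ i, X i ∈ P) ∧ (∀ i, d ≤ Metric.infDist (X i) (frontier P)) ∧
      ∀ i j, i ≠ j → d ≤ dist (X i) (X j)}

/-! If `D = Disp(n;P) > 0`, compactness makes the supremum defining `D` attained by some
configuration `Y`; its open balls of radius `D/2` are pairwise disjoint and lie in the inner
region `{q ∈ P | D/2 ≤ dist(q, ∂P)}`. Were every point of this compact region closer than `D/2`
to some `pᵢ`, compactness would give one radius `s < D/2` for which the closed `s`-balls around
the `pᵢ` cover the region, so `n` disjoint balls of radius `D/2` would fit, by volume, into `n`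
balls of radius `s`. -/

open Function Metric MeasureTheory Set

section MetricSpace

variable {α ι : Type*} [MetricSpace α]

def IsDispersed (P : Set α) (d : ℝ) (X : ι → α) : Prop :=
  (∀ i, X i ∈ P) ∧ (∀ i, d ≤ infDist (X i) (frontier P)) ∧ ∀ i j, i ≠ j → d ≤ dist (X i) (X j)

def innerRegion (P : Set α) (r : ℝ) : Set α :=
  {q ∈ P | r ≤ infDist q (frontier P)}

lemma Metric.nontrivial_of_infDist_pos {x : α} {s : Set α} (h : 0 < infDist x s) :
    Nontrivial α := by
  obtain ⟨z, hz⟩ : s.Nonempty := by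
    by_contra hs
    rw [not_nonempty_iff_eq_empty.1 hs, infDist_empty] at h
    exact h.false
  exact ⟨x, z, dist_pos.1 (h.trans_le (infDist_le_dist_of_mem hz))⟩

lemma isCompact_innerRegion {P : Set α} (hP : IsCompact P) (r : ℝ) :
    IsCompact (innerRegion P r) :=
  hP.of_isClosed_subset
    (hP.isClosed.inter (isClosed_le continuous_const (continuous_infDist_pt _))) (sep_subset _ _)

lemma isClosed_setOf_exists_isDispersed {P : Set α} (hP : IsCompact P) :
    IsClosed {d : ℝ | ∃ X : ι → α, IsDispersed P d X} := by
  let K := univ.pi fun _ : ι => P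
  have : CompactSpace K := isCompact_iff_compactSpace.1 (isCompact_univ_pi fun _ => hP)
  have hT : IsClosed {z : ℝ × K | (∀ i, z.1 ≤ infDist (z.2.1 i) (frontier P)) ∧
      ∀ i j, i ≠ j → z.1 ≤ dist (z.2.1 i) (z.2.1 j)} := by
    have hX : ∀ i, Continuous fun z : ℝ × K => (z.2 : ι → α) i :=
      fun i => (continuous_apply i).comp (continuous_subtype_val.comp continuous_snd)
    simp only [ofPred_and, ofPred_forall]
    exact (isClosed_iInter fun i => isClosed_le continuous_fst
      ((continuous_infDist_pt _).comp (hX i))).inter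
      (isClosed_iInter fun i => isClosed_iInter fun j => isClosed_iInter fun _ =>
        isClosed_le continuous_fst ((hX i).dist (hX j)))
  convert isClosedMap_fst_of_compactSpace _ hT using 1
  ext d
  constructor
  · rintro ⟨X, hXP, hXb, hXX⟩
    exact ⟨(d, ⟨X, fun i _ => hXP i⟩), ⟨hXb, hXX⟩, rfl⟩
  · rintro ⟨⟨d, X, hXP⟩, ⟨hXb, hXX⟩, rfl⟩
    exact ⟨X, fun i => hXP i trivial, hXb, hXX⟩

end MetricSpace

section NormedSpace

variable {E : Type*} [NormedAddCommGroup E] [NormedSpace ℝ E]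

lemma Metric.ball_infDist_frontier_subset_interior {P : Set E} {x : E} (hx : x ∈ P) :
    ball x (infDist x (frontier P)) ⊆ interior P := by
  have mem_interior : ∀ y ∈ closure P, y ∉ frontier P → y ∈ interior P :=
    fun y hy hyP => by_contra fun h => hyP ⟨hy, h⟩
  rcases (ball x (infDist x (frontier P))).eq_empty_or_nonempty with h | h
  · simp [h]
  have hx₀ : x ∈ ball x (infDist x (frontier P)) := mem_ball_self (nonempty_ball.1 h)
  refine (convex_ball x _).isPreconnected.subset_of_closure_inter_subset isOpen_interior
    ⟨x, hx₀, mem_interior x (subset_closure hx) (ball_infDist_subset_compl hx₀)⟩ ?_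
  rintro y ⟨hy, hyb⟩
  exact mem_interior y (closure_mono interior_subset hy) (ball_infDist_subset_compl hyb)

lemma ball_subset_innerRegion {P : Set E} {x : E} {r : ℝ} (hx : x ∈ P)
    (h : 2 * r ≤ infDist x (frontier P)) : ball x r ⊆ innerRegion P r := by
  intro q hq
  have hqx : dist q x < r := hq
  have hr : 0 < r := dist_nonneg.trans_lt hqx
  refine ⟨interior_subset (ball_infDist_frontier_subset_interior hx ?_), ?_⟩
  · rw [mem_ball]
    linarith
  · have := infDist_le_infDist_add_dist (x := x) (y := q) (s := frontier P)
    rw [dist_comm] at this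
    linarith

variable [FiniteDimensional ℝ E] [Nontrivial E]

lemma MeasureTheory.Measure.addHaar_ball_lt_addHaar_ball [MeasurableSpace E] [BorelSpace E]
    (μ : Measure E) [μ.IsAddHaarMeasure] (x y : E) {s r : ℝ}
    (hsr : s < r) (hr : 0 < r) : μ (ball x s) < μ (ball y r) := by
  rcases le_or_gt s 0 with hs | hs
  · simpa [ball_eq_empty.2 hs] using measure_ball_pos μ y hr
  rw [Measure.addHaar_ball μ x hs.le, Measure.addHaar_ball μ y hr.le]
  exact ENNReal.mul_lt_mul_left (measure_ball_pos μ 0 one_pos).ne' measure_ball_lt_top.ne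
    ((ENNReal.ofReal_lt_ofReal_iff (by positivity)).2
      (pow_lt_pow_left₀ hsr hs.le Module.finrank_pos.ne'))

theorem not_iUnion_ball_subset_iUnion_closedBall {ι : Type*} [Fintype ι] [Nonempty ι]
    {Y p : ι → E} {r s : ℝ} (hsr : s < r) (hr : 0 < r)
    (hY : Pairwise (Disjoint on fun i => ball (Y i) r)) :
    ¬ (⋃ i, ball (Y i) r) ⊆ ⋃ i, closedBall (p i) s := by
  intro hsub
  borelize E
  let μ : Measure E := Measure.addHaar
  refine (ENNReal.mul_lt_mul_right (by simp) (ENNReal.natCast_ne_top (Fintype.card ι))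
    (Measure.addHaar_ball_lt_addHaar_ball μ 0 0 hsr hr)).not_ge ?_
  calc (Fintype.card ι : ENNReal) * μ (ball 0 r) = μ (⋃ i, ball (Y i) r) := by
        rw [measure_iUnion hY fun _ => measurableSet_ball, tsum_fintype]
        simp [Measure.addHaar_ball_center]
    _ ≤ μ (⋃ i, closedBall (p i) s) := measure_mono hsub
    _ ≤ ∑ i, μ (closedBall (p i) s) := measure_iUnion_fintype_le μ _
    _ = Fintype.card ι * μ (ball 0 s) := by
        simp [Measure.addHaar_closedBall_eq_addHaar_ball, Measure.addHaar_ball_center]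

theorem IsCompact.exists_mem_forall_le_dist_of_pairwise_disjoint_ball {ι : Type*} [Fintype ι]
    [Nonempty ι] {K : Set E} (hK : IsCompact K) {Y : ι → E} {r : ℝ} (hr : 0 < r)
    (hY : Pairwise (Disjoint on fun i => ball (Y i) r)) (hYK : ⋃ i, ball (Y i) r ⊆ K)
    (p : ι → E) : ∃ q ∈ K, ∀ i, r ≤ dist q (p i) := by
  by_contra! h
  obtain ⟨i₀⟩ := ‹Nonempty ι›
  obtain ⟨q₀, hq₀, hmax⟩ := hK.exists_isMaxOn
    ⟨Y i₀, hYK (mem_iUnion_of_mem i₀ (mem_ball_self hr))⟩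
    (continuous_infDist_pt (range p)).continuousOn
  have hK_cover : K ⊆ ⋃ i, closedBall (p i) (infDist q₀ (range p)) := by
    intro q hq
    obtain ⟨_, ⟨i, rfl⟩, hi⟩ :=
      (finite_range p).isCompact.exists_infDist_eq_dist (range_nonempty p) q
    exact mem_iUnion_of_mem i (mem_closedBall.2 (hi ▸ hmax hq))
  have hlt : infDist q₀ (range p) < r := by
    obtain ⟨i, hi⟩ := h q₀ hq₀
    exact (infDist_le_dist_of_mem (mem_range_self i)).trans_lt hi
  exact not_iUnion_ball_subset_iUnion_closedBall hlt hr hY (hYK.trans hK_cover)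

end NormedSpace

lemma disp_eq_sSup (k n : ℕ) (P : Set (EuclideanSpace ℝ (Fin k))) :
    disp k n P = sSup {d | ∃ X : Fin n → EuclideanSpace ℝ (Fin k), IsDispersed P d X} :=
  rfl

lemma disp_zero (k : ℕ) (P : Set (EuclideanSpace ℝ (Fin k))) : disp k 0 P = 0 := by
  have : {d | ∃ X : Fin 0 → EuclideanSpace ℝ (Fin k), IsDispersed P d X} = univ :=
    eq_univ_of_forall fun d => ⟨Fin.elim0, fun i => i.elim0, fun i => i.elim0, fun i => i.elim0⟩
  rw [disp_eq_sSup, this, Real.sSup_univ]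

lemma exists_isDispersed_disp {k n : ℕ} {P : Set (EuclideanSpace ℝ (Fin k))} (hP : IsCompact P)
    (hpos : 0 < disp k n P) :
    ∃ X : Fin n → EuclideanSpace ℝ (Fin k), IsDispersed P (disp k n P) X := by
  rw [disp_eq_sSup] at hpos ⊢
  -- `sSup` of an empty or unbounded set of reals is `0`.
  refine (isClosed_setOf_exists_isDispersed hP).csSup_mem ?_ ?_
  · by_contra h
    rw [not_nonempty_iff_eq_empty.1 h, Real.sSup_empty] at hpos
    exact hpos.false
  · by_contra h
    rw [Real.sSup_of_not_bddAbove h] at hpos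
    exact hpos.false

theorem exists_far_point_general (k n : ℕ) (P : Set (EuclideanSpace ℝ (Fin k)))
    (hcpt : IsCompact P) (hint : (interior P).Nonempty)
    (p : Fin n → EuclideanSpace ℝ (Fin k)) :
    ∃ q ∈ P, disp k n P / 2 ≤ Metric.infDist q (frontier P) ∧
      ∀ i, disp k n P / 2 ≤ dist q (p i) := by
  rcases le_or_gt (disp k n P) 0 with hD | hD
  · obtain ⟨q, hq⟩ := hint
    exact ⟨q, interior_subset hq, by linarith [infDist_nonneg (x := q) (s := frontier P)],
      fun i => by linarith [dist_nonneg (x := q) (y := p i)]⟩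
  obtain ⟨Y, hYP, hYb, hYY⟩ := exists_isDispersed_disp hcpt hD
  have : NeZero n := ⟨by rintro rfl; simp [disp_zero] at hD⟩
  have : Nontrivial (EuclideanSpace ℝ (Fin k)) := nontrivial_of_infDist_pos (hD.trans_le (hYb 0))
  obtain ⟨q, ⟨hqP, hqb⟩, hqp⟩ :=
    IsCompact.exists_mem_forall_le_dist_of_pairwise_disjoint_ball (isCompact_innerRegion hcpt _)
      (half_pos hD) (fun i j hij => ball_disjoint_ball (by linarith [hYY i j hij]))
      (iUnion_subset fun i => ball_subset_innerRegion (hYP i) (by linarith [hYb i])) p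
  exact ⟨q, hqP, hqb, hqp⟩

/-- Lemma 8: given any `n` points in a full-dimensional compact body `P ⊆ ℝᵏ`, there
is a point `p ∈ P` whose distance to each given point and to the boundary of `P`
is at least `Disp(n;P)/2`. -/
theorem exists_far_point (k n : ℕ) (P : Set (EuclideanSpace ℝ (Fin k)))
    (hcpt : IsCompact P) (hint : (interior P).Nonempty)
    (p : Fin n → EuclideanSpace ℝ (Fin k)) (hp : ∀ i, p i ∈ P) :
    ∃ q ∈ P, disp k n P / 2 ≤ Metric.infDist q (frontier P) ∧
      ∀ i, disp k n P / 2 ≤ dist q (p i) :=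
  exists_far_point_general k n P hcpt hint p
end
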